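/- arXiv:2310.19041 — 4 statements merged into one kernel-verified Lean document; each statement's English description precedes it below -/
import Mathlib

section
/- If R₁, R₂ ⊆ Ω are disjoint measurable sets with P₀(R₁) = P₀(R₂) = Δ and 0 < Δ < 1/2, then the covariance of the likelihood ratios is bounded: |∫_{Ωⁿ} F_{R₁}·F_{R₂} dP₀ⁿ − 1| ≤ n·Δ²/((1−Δ)·√(1−2Δ)). -/
/-!
Since `R₁` and `R₂` are disjoint, `F_{R₁} F_{R₂}` is `(1 - Δ)^{-2n}` times the indicator
of `((R₁ ∪ R₂)ᶜ)ⁿ`, so the integral equals `rⁿ` with `r = (1 - 2Δ) / (1 - Δ)² ∈ [0, 1]`.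
Bernoulli's inequality gives `1 - rⁿ ≤ n (1 - r) = n Δ² / (1 - Δ)²`, and
`√(1 - 2Δ) ≤ 1 - Δ`.
-/

open MeasureTheory

theorem integral_pi_prod_indicator_one {ι : Type*} [Fintype ι] {E : ι → Type*}
    {mE : ∀ i, MeasurableSpace (E i)} (μ : (i : ι) → Measure (E i))
    [∀ i, SigmaFinite (μ i)] {S : (i : ι) → Set (E i)} (hS : ∀ i, MeasurableSet (S i)) :
    ∫ x, ∏ i, (S i).indicator (1 : E i → ℝ) (x i) ∂Measure.pi μ =
      ∏ i, (μ i).real (S i) := by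
  rw [integral_fintype_prod_eq_prod]
  exact Finset.prod_congr rfl fun i _ => integral_indicator_one (hS i)

theorem prod_indicator_compl_mul_prod_indicator_compl {ι α M₀ : Type*} [CommMonoidWithZero M₀]
    (s : Finset ι) (A B : Set α) (x : ι → α) :
    (∏ i ∈ s, Aᶜ.indicator (1 : α → M₀) (x i)) * ∏ i ∈ s, Bᶜ.indicator 1 (x i) =
      ∏ i ∈ s, (A ∪ B)ᶜ.indicator 1 (x i) := by
  rw [← Finset.prod_mul_distrib, Set.compl_union, Set.inter_indicator_one]
  rfl

theorem one_sub_pow_le_mul_one_sub {r : ℝ} (hr₀ : 0 ≤ r) (n : ℕ) :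
    1 - r ^ n ≤ n * (1 - r) := by
  have := one_add_mul_le_pow (a := r - 1) (by linarith) n
  rw [add_sub_cancel] at this
  linarith

theorem sqrt_one_sub_two_mul_le {Δ : ℝ} (hΔ : Δ ≤ 1) : √(1 - 2 * Δ) ≤ 1 - Δ :=
  Real.sqrt_le_iff.mpr ⟨by linarith, by nlinarith [sq_nonneg Δ]⟩

theorem abs_pow_div_one_sub_sq_sub_one_le {Δ : ℝ} (hΔ : Δ < 1 / 2) (n : ℕ) :
    |((1 - 2 * Δ) / (1 - Δ) ^ 2) ^ n - 1| ≤ n * Δ ^ 2 / ((1 - Δ) * √(1 - 2 * Δ)) := by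
  have h1Δ : 0 < 1 - Δ := by linarith
  have hr : 1 - (1 - 2 * Δ) / (1 - Δ) ^ 2 = Δ ^ 2 / (1 - Δ) ^ 2 := by field_simp; ring
  set r := (1 - 2 * Δ) / (1 - Δ) ^ 2
  have hr₀ : 0 ≤ r := div_nonneg (by linarith) (by positivity)
  have hr₁ : r ≤ 1 := by rw [← sub_nonneg, hr]; positivity
  have hrn : r ^ n ≤ 1 := pow_le_one₀ hr₀ hr₁
  have hden : (1 - Δ) * √(1 - 2 * Δ) ≤ (1 - Δ) ^ 2 := by
    rw [sq]; exact mul_le_mul_of_nonneg_left (sqrt_one_sub_two_mul_le (by linarith)) h1Δ.le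
  calc |r ^ n - 1| = 1 - r ^ n := by rw [abs_sub_comm, abs_of_nonneg (by linarith)]
    _ ≤ n * (1 - r) := one_sub_pow_le_mul_one_sub hr₀ n
    _ = n * Δ ^ 2 / (1 - Δ) ^ 2 := by rw [hr, mul_div_assoc]
    _ ≤ n * Δ ^ 2 / ((1 - Δ) * √(1 - 2 * Δ)) := by
      gcongr
      exact mul_pos h1Δ (Real.sqrt_pos.mpr (by linarith))

theorem likelihood_ratio_cov_bound_general {Ω : Type*} [MeasurableSpace Ω]
    (P₀ : Measure Ω) [IsProbabilityMeasure P₀]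
    (n : ℕ)
    (R₁ R₂ : Set Ω) (hR₁ : MeasurableSet R₁) (hR₂ : MeasurableSet R₂)
    (hdisj : Disjoint R₁ R₂)
    (Δ : ℝ) (hΔ0 : 0 < Δ) (hΔ1 : Δ < 1/2)
    (hPR₁ : P₀ R₁ = ENNReal.ofReal Δ) (hPR₂ : P₀ R₂ = ENNReal.ofReal Δ)
    (F₁ F₂ : (Fin n → Ω) → ℝ)
    (hF₁ : ∀ x, F₁ x = ((1 - Δ)^n)⁻¹ * ∏ i, Set.indicator R₁ᶜ (fun _ => (1:ℝ)) (x i))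
    (hF₂ : ∀ x, F₂ x = ((1 - Δ)^n)⁻¹ * ∏ i, Set.indicator R₂ᶜ (fun _ => (1:ℝ)) (x i)) :
    |(∫ x, F₁ x * F₂ x ∂(Measure.pi fun _ : Fin n => P₀)) - 1|
      ≤ n * Δ^2 / ((1 - Δ) * Real.sqrt (1 - 2*Δ)) := by
  have hF : ∀ x, F₁ x * F₂ x =
      ((1 - Δ) ^ n)⁻¹ ^ 2 * ∏ i, (R₁ ∪ R₂)ᶜ.indicator (1 : Ω → ℝ) (x i) := fun x => by
    rw [hF₁, hF₂, mul_mul_mul_comm, ← sq]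
    exact congrArg _ (prod_indicator_compl_mul_prod_indicator_compl _ _ _ x)
  have hcompl : P₀.real (R₁ ∪ R₂)ᶜ = 1 - 2 * Δ := by
    rw [probReal_compl_eq_one_sub (hR₁.union hR₂), measureReal_union hdisj hR₂,
      measureReal_def, measureReal_def, hPR₁, hPR₂, ENNReal.toReal_ofReal hΔ0.le]
    ring
  have hint : ∫ x, F₁ x * F₂ x ∂(Measure.pi fun _ : Fin n => P₀) =
      ((1 - 2 * Δ) / (1 - Δ) ^ 2) ^ n := by
    simp_rw [hF]
    rw [integral_const_mul,
      integral_pi_prod_indicator_one _ fun _ => (hR₁.union hR₂).compl, hcompl,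
      Finset.prod_const, Finset.card_univ, Fintype.card_fin, div_pow, ← pow_mul, inv_pow,
      ← pow_mul, mul_comm n 2, div_eq_inv_mul]
  rw [hint]
  exact abs_pow_div_one_sub_sq_sub_one_le hΔ1 n

theorem likelihood_ratio_cov_bound {Ω : Type*} [MeasurableSpace Ω]
    (P₀ : Measure Ω) [IsProbabilityMeasure P₀]
    (n : ℕ) (hn : 1 ≤ n)
    (R₁ R₂ : Set Ω) (hR₁ : MeasurableSet R₁) (hR₂ : MeasurableSet R₂)
    (hdisj : Disjoint R₁ R₂)
    (Δ : ℝ) (hΔ0 : 0 < Δ) (hΔ1 : Δ < 1/2)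
    (hPR₁ : P₀ R₁ = ENNReal.ofReal Δ) (hPR₂ : P₀ R₂ = ENNReal.ofReal Δ)
    (F₁ F₂ : (Fin n → Ω) → ℝ)
    (hF₁ : ∀ x, F₁ x = ((1 - Δ)^n)⁻¹ * ∏ i, Set.indicator R₁ᶜ (fun _ => (1:ℝ)) (x i))
    (hF₂ : ∀ x, F₂ x = ((1 - Δ)^n)⁻¹ * ∏ i, Set.indicator R₂ᶜ (fun _ => (1:ℝ)) (x i)) :
    |(∫ x, F₁ x * F₂ x ∂(Measure.pi fun _ : Fin n => P₀)) - 1|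
      ≤ n * Δ^2 / ((1 - Δ) * Real.sqrt (1 - 2*Δ)) :=
  likelihood_ratio_cov_bound_general P₀ n R₁ R₂ hR₁ hR₂ hdisj Δ hΔ0 hΔ1 hPR₁ hPR₂ F₁ F₂ hF₁ hF₂
end

section
/- Let R₁,…,R_L ⊆ Ω be pairwise disjoint measurable sets, each with P₀(R_l) = Δ, where 0 < Δ < 1/2. Then the chi-square divergence of the uniform mixture of conditional product measures from P₀ⁿ is bounded: ∫_{Ωⁿ} ( (1/L)·∑_{l=1}^L F_{R_l} − 1 )² dP₀ⁿ ≤ (1/L)·exp(nΔ/(1−Δ)) + n·Δ²/((1−Δ)·√(1−2Δ)). -/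
/-!
Each `F_{R_l}` is a probability density, so expanding the square gives
`∫ (L⁻¹ ∑ F_{R_l} - 1)² = L⁻² ∑_{l,m} ∫ F_{R_l} F_{R_m} - 1`. A diagonal term equals
`(1 - Δ)⁻ⁿ`; an off-diagonal one equals `((1 - 2Δ) / (1 - Δ)²)ⁿ ≤ 1`, because disjointness makes
`P₀(R_lᶜ ∩ R_mᶜ) = 1 - 2Δ`. Hence the divergence is at most `((1 - Δ)⁻ⁿ - 1) / L`, and
`(1 - Δ)⁻¹ = 1 + Δ / (1 - Δ) ≤ exp (Δ / (1 - Δ))`.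
-/

open MeasureTheory

section Mixture

variable {X ι : Type*} [MeasurableSpace X] {μ : Measure X} [IsProbabilityMeasure μ] [Fintype ι]
  {g : ι → X → ℝ}

theorem integral_sq_mean_sub_one_eq [Nonempty ι] (hg : ∀ l, MemLp (g l) 2 μ)
    (hmean : ∀ l, ∫ x, g l x ∂μ = 1) :
    ∫ x, ((1 / (Fintype.card ι : ℝ)) * ∑ l, g l x - 1) ^ 2 ∂μ
      = (1 / (Fintype.card ι : ℝ)) ^ 2 * ∑ l, ∑ m, ∫ x, g l x * g m x ∂μ - 1 := by
  set N : ℝ := (Fintype.card ι : ℝ)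
  have hN : N ≠ 0 := by positivity
  have hint : ∀ l, Integrable (g l) μ := fun l => (hg l).integrable one_le_two
  have hint₂ : ∀ l m, Integrable (fun x => g l x * g m x) μ := fun l m =>
    (hg l).integrable_mul (hg m)
  have hint_sum : Integrable (fun x => ∑ l, g l x) μ := integrable_finsetSum _ fun l _ => hint l
  have hint_sum₂ : Integrable (fun x => ∑ l, ∑ m, g l x * g m x) μ :=
    integrable_finsetSum _ fun l _ => integrable_finsetSum _ fun m _ => hint₂ l m
  have hexpand : ∀ x, ((1 / N) * ∑ l, g l x - 1) ^ 2
      = (1 / N) ^ 2 * ∑ l, ∑ m, g l x * g m x - 2 / N * ∑ l, g l x + 1 := fun x => by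
    rw [← Finset.sum_mul_sum]; ring
  have hint_diff : Integrable
      (fun x => (1 / N) ^ 2 * ∑ l, ∑ m, g l x * g m x - 2 / N * ∑ l, g l x) μ :=
    (hint_sum₂.const_mul _).sub (hint_sum.const_mul _)
  simp_rw [hexpand]
  rw [integral_add hint_diff (integrable_const _),
    integral_sub (hint_sum₂.const_mul _) (hint_sum.const_mul _), integral_const_mul,
    integral_const_mul, integral_finsetSum _ fun l _ => hint l,
    integral_finsetSum _ fun l _ => integrable_finsetSum _ fun m _ => hint₂ l m]
  simp_rw [integral_finsetSum _ fun m _ => hint₂ _ m]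
  simp only [hmean, Finset.sum_const, Finset.card_univ, nsmul_eq_mul, mul_one, integral_const,
    probReal_univ, one_smul]
  field_simp
  ring

theorem integral_sq_mean_sub_one_le [Nonempty ι] {K : ℝ} (hg : ∀ l, MemLp (g l) 2 μ)
    (hmean : ∀ l, ∫ x, g l x ∂μ = 1) (hdiag : ∀ l, ∫ x, g l x * g l x ∂μ ≤ K)
    (hoff : ∀ l m, l ≠ m → ∫ x, g l x * g m x ∂μ ≤ 1) :
    ∫ x, ((1 / (Fintype.card ι : ℝ)) * ∑ l, g l x - 1) ^ 2 ∂μ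
      ≤ (K - 1) / Fintype.card ι := by
  classical
  set N : ℝ := (Fintype.card ι : ℝ)
  have hN : 0 < N := by positivity
  have hrow : ∀ l, ∑ m, ∫ x, g l x * g m x ∂μ ≤ K + (N - 1) := fun l => by
    rw [← Finset.add_sum_erase _ _ (Finset.mem_univ l)]
    refine add_le_add (hdiag l) ((Finset.sum_le_card_nsmul _ _ 1 fun m hm =>
      hoff l m (Finset.ne_of_mem_erase hm).symm).trans_eq ?_)
    simp [Finset.card_erase_of_mem, N, Nat.cast_sub Fintype.card_pos]
  have hsum : ∑ l, ∑ m, ∫ x, g l x * g m x ∂μ ≤ N * (K + (N - 1)) :=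
    (Finset.sum_le_card_nsmul _ _ _ fun l _ => hrow l).trans_eq
      (by rw [Finset.card_univ, nsmul_eq_mul])
  rw [integral_sq_mean_sub_one_eq hg hmean]
  calc (1 / N) ^ 2 * ∑ l, ∑ m, ∫ x, g l x * g m x ∂μ - 1
      ≤ (1 / N) ^ 2 * (N * (K + (N - 1))) - 1 := by gcongr
    _ = (K - 1) / N := by field_simp; ring

end Mixture

theorem measureReal_univ_pi_const {Ω ι : Type*} [MeasurableSpace Ω] [Fintype ι]
    (P : Measure Ω) [SigmaFinite P] (S : Set Ω) :
    (Measure.pi fun _ : ι => P).real (Set.univ.pi fun _ => S) = P.real S ^ Fintype.card ι := by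
  simp [Measure.real, Measure.pi_pi]

theorem probReal_compl_inter_compl {Ω : Type*} [MeasurableSpace Ω] {P : Measure Ω}
    [IsProbabilityMeasure P] {R S : Set Ω} (hR : MeasurableSet R) (hS : MeasurableSet S)
    (hRS : Disjoint R S) : P.real (Rᶜ ∩ Sᶜ) = 1 - P.real R - P.real S := by
  rw [← Set.compl_union, probReal_compl_eq_one_sub (hR.union hS), measureReal_union hRS hS]
  ring

theorem integral_const_mul_indicator_mul {X : Type*} [MeasurableSpace X] (μ : Measure X)
    (c d : ℝ) {A B : Set X} (hA : MeasurableSet A) (hB : MeasurableSet B) :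
    ∫ x, c * A.indicator 1 x * (d * B.indicator 1 x) ∂μ = c * d * μ.real (A ∩ B) := by
  simp_rw [mul_mul_mul_comm, ← Pi.mul_apply (A.indicator 1), ← Set.inter_indicator_one,
    integral_const_mul, integral_indicator_one (hA.inter hB)]

theorem inv_one_sub_pow_le_exp {Δ : ℝ} (hΔ : Δ < 1) (n : ℕ) :
    ((1 - Δ) ^ n)⁻¹ ≤ Real.exp (n * Δ / (1 - Δ)) := by
  have h : (1 - Δ)⁻¹ ≤ Real.exp (Δ / (1 - Δ)) := by
    have : (1 - Δ)⁻¹ = Δ / (1 - Δ) + 1 := by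
      rw [div_add_one (by linarith), add_sub_cancel, one_div]
    exact this ▸ Real.add_one_le_exp _
  calc ((1 - Δ) ^ n)⁻¹ = (1 - Δ)⁻¹ ^ n := (inv_pow _ _).symm
    _ ≤ Real.exp (Δ / (1 - Δ)) ^ n := pow_le_pow_left₀ (inv_nonneg.2 (by linarith)) h n
    _ = Real.exp (n * Δ / (1 - Δ)) := by rw [← Real.exp_nat_mul, mul_div_assoc]

section ComplPiDensity

variable {Ω : Type*} [MeasurableSpace Ω] (P : Measure Ω) [IsProbabilityMeasure P] (n : ℕ)
  {R S : Set Ω}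

/-- The paper's `F_R`, with `Δ = P R`. -/
noncomputable def complPiDensity (R : Set Ω) (x : Fin n → Ω) : ℝ :=
  ((1 - P.real R) ^ n)⁻¹ * (Set.univ.pi fun _ => Rᶜ).indicator 1 x

variable {P n}

theorem memLp_complPiDensity (hR : MeasurableSet R) :
    MemLp (complPiDensity P n R) 2 (Measure.pi fun _ => P) :=
  (memLp_indicator_const 2 (.univ_pi fun _ => hR.compl) (1 : ℝ)
    (Or.inr (measure_ne_top _ _))).const_mul _

theorem measureReal_univ_pi_compl (hR : MeasurableSet R) :
    (Measure.pi fun _ : Fin n => P).real (Set.univ.pi fun _ => Rᶜ) = (1 - P.real R) ^ n := by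
  rw [measureReal_univ_pi_const, probReal_compl_eq_one_sub hR, Fintype.card_fin]

theorem integral_complPiDensity (hR : MeasurableSet R) (hR1 : P.real R < 1) :
    ∫ x, complPiDensity P n R x ∂(Measure.pi fun _ => P) = 1 := by
  simp only [complPiDensity]
  simp_rw [integral_const_mul, integral_indicator_one (.univ_pi fun _ => hR.compl),
    measureReal_univ_pi_compl hR]
  exact inv_mul_cancel₀ (pow_ne_zero _ (by linarith))

theorem integral_complPiDensity_mul_self (hR : MeasurableSet R) (hR1 : P.real R < 1) :
    ∫ x, complPiDensity P n R x * complPiDensity P n R x ∂(Measure.pi fun _ => P)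
      = ((1 - P.real R) ^ n)⁻¹ := by
  have hA : MeasurableSet (Set.univ.pi fun _ : Fin n => Rᶜ) := .univ_pi fun _ => hR.compl
  simp only [complPiDensity]
  rw [integral_const_mul_indicator_mul _ _ _ hA hA, Set.inter_self,
    measureReal_univ_pi_compl hR, mul_assoc, inv_mul_cancel₀ (pow_ne_zero _ (by linarith)),
    mul_one]

theorem integral_complPiDensity_mul_le_one (hR : MeasurableSet R) (hS : MeasurableSet S)
    (hRS : Disjoint R S) (hR1 : P.real R < 1) (hS1 : P.real S < 1) :
    ∫ x, complPiDensity P n R x * complPiDensity P n S x ∂(Measure.pi fun _ => P) ≤ 1 := by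
  simp only [complPiDensity]
  rw [integral_const_mul_indicator_mul _ _ _ (.univ_pi fun _ => hR.compl)
    (.univ_pi fun _ => hS.compl), ← Set.pi_inter_distrib, measureReal_univ_pi_const,
    probReal_compl_inter_compl hR hS hRS, Fintype.card_fin]
  have hRS1 : 0 ≤ 1 - P.real R - P.real S := by
    rw [← probReal_compl_inter_compl hR hS hRS]; exact measureReal_nonneg
  have hR0 : (1 - P.real R) ^ n ≠ 0 := pow_ne_zero n (by linarith)
  have hS0 : (1 - P.real S) ^ n ≠ 0 := pow_ne_zero n (by linarith)
  calc ((1 - P.real R) ^ n)⁻¹ * ((1 - P.real S) ^ n)⁻¹ * (1 - P.real R - P.real S) ^ n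
      ≤ ((1 - P.real R) ^ n)⁻¹ * ((1 - P.real S) ^ n)⁻¹
          * ((1 - P.real R) * (1 - P.real S)) ^ n := by
        gcongr
        nlinarith [measureReal_nonneg (μ := P) (s := R), measureReal_nonneg (μ := P) (s := S)]
    _ = 1 := by
        rw [mul_pow]
        field_simp

end ComplPiDensity

theorem chi_square_mixture_bound_general {Ω : Type*} [MeasurableSpace Ω]
    (P₀ : Measure Ω) [IsProbabilityMeasure P₀]
    (n : ℕ)
    (L : ℕ) (hL : 1 ≤ L)
    (R : Fin L → Set Ω) (hR : ∀ l, MeasurableSet (R l))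
    (hdisj : Pairwise fun l₁ l₂ => Disjoint (R l₁) (R l₂))
    (Δ : ℝ) (hΔ0 : 0 < Δ) (hΔ1 : Δ < 1/2)
    (hPR : ∀ l, P₀ (R l) = ENNReal.ofReal Δ)
    (F : Fin L → (Fin n → Ω) → ℝ)
    (hF : ∀ l x, F l x = ((1 - Δ)^n)⁻¹ * ∏ i, Set.indicator (R l)ᶜ (fun _ => (1:ℝ)) (x i)) :
    (∫ x, ((1 / (L:ℝ)) * ∑ l, F l x - 1)^2 ∂(Measure.pi fun _ : Fin n => P₀))
      ≤ (1 / (L:ℝ)) * Real.exp (n * Δ / (1 - Δ))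
        + n * Δ^2 / ((1 - Δ) * Real.sqrt (1 - 2*Δ)) := by
  have hP : ∀ l, P₀.real (R l) = Δ := fun l => by simp [Measure.real, hPR, hΔ0.le]
  have hP1 : ∀ l, P₀.real (R l) < 1 := fun l => by linarith [hP l]
  have hFR : ∀ l, F l = complPiDensity P₀ n (R l) := fun l => by
    ext x
    simp only [hF, complPiDensity, hP, ← Finset.coe_univ, Set.indicator_pi_one_apply]
    rfl
  have : Nonempty (Fin L) := ⟨⟨0, hL⟩⟩
  have hchi := integral_sq_mean_sub_one_le (K := ((1 - Δ) ^ n)⁻¹)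
    (fun l => memLp_complPiDensity (hR l)) (fun l => integral_complPiDensity (hR l) (hP1 l))
    (fun l => (integral_complPiDensity_mul_self (hR l) (hP1 l)).trans_le (by rw [hP]))
    (fun l m hlm =>
      integral_complPiDensity_mul_le_one (hR l) (hR m) (hdisj hlm) (hP1 l) (hP1 m))
  rw [Fintype.card_fin] at hchi
  simp_rw [hFR]
  calc _ ≤ (((1 - Δ) ^ n)⁻¹ - 1) / L := hchi
    _ ≤ 1 / L * Real.exp (n * Δ / (1 - Δ)) := by
      rw [one_div_mul_eq_div]
      gcongr
      linarith [inv_one_sub_pow_le_exp (by linarith : Δ < 1) n]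
    _ ≤ _ := le_add_of_nonneg_right <|
      div_nonneg (by positivity) (mul_nonneg (by linarith) (Real.sqrt_nonneg _))

theorem chi_square_mixture_bound {Ω : Type*} [MeasurableSpace Ω]
    (P₀ : Measure Ω) [IsProbabilityMeasure P₀]
    (n : ℕ) (hn : 1 ≤ n)
    (L : ℕ) (hL : 1 ≤ L)
    (R : Fin L → Set Ω) (hR : ∀ l, MeasurableSet (R l))
    (hdisj : Pairwise fun l₁ l₂ => Disjoint (R l₁) (R l₂))
    (Δ : ℝ) (hΔ0 : 0 < Δ) (hΔ1 : Δ < 1/2)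
    (hPR : ∀ l, P₀ (R l) = ENNReal.ofReal Δ)
    (F : Fin L → (Fin n → Ω) → ℝ)
    (hF : ∀ l x, F l x = ((1 - Δ)^n)⁻¹ * ∏ i, Set.indicator (R l)ᶜ (fun _ => (1:ℝ)) (x i)) :
    (∫ x, ((1 / (L:ℝ)) * ∑ l, F l x - 1)^2 ∂(Measure.pi fun _ : Fin n => P₀))
      ≤ (1 / (L:ℝ)) * Real.exp (n * Δ / (1 - Δ))
        + n * Δ^2 / ((1 - Δ) * Real.sqrt (1 - 2*Δ)) :=
  chi_square_mixture_bound_general P₀ n L hL R hR hdisj Δ hΔ0 hΔ1 hPR F hF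
end

section
/- If ν(B̄(x, r)) ≤ β for every x ∈ ℝ^D and μ(B̄(y, r)) ≤ β for every y ∈ ℝ^D, where B̄(x, r) is the closed Euclidean ball of radius r centered at x, then the variance of the cross-edge count satisfies Var(Z) ≤ 4β·n₁·n₂ + 2β²·n₁·n₂·(n₁ + n₂). -/
/-!
Write `Z` as the sum of the edge indicators `1{dist (X i) (Y j) ≤ r}`, so that `Var Z` is the sum
of the covariances of pairs of edges. Edges on four distinct vertices are independent, so their
covariance vanishes; otherwise it is at most the probability that both edges are present. One edge
is present with probability at most `β` (integrate the ball bound for `Y j` against the law of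
`X i`), and two edges sharing a vertex with probability at most `β²`: the free endpoint of the
second edge is independent of the first edge and must land in the `r`-ball around the shared
vertex. There are `n₁ n₂` diagonal pairs and at most `n₁ n₂ (n₁ + n₂)` pairs sharing a vertex.
-/

open MeasureTheory ProbabilityTheory Metric
open scoped ENNReal

section BallBound

variable {α E : Type*} [MeasurableSpace α] [PseudoMetricSpace E] [MeasurableSpace E]
  [OpensMeasurableSpace E] [SecondCountableTopology E] {r : ℝ} {b : ℝ≥0∞}

lemma measurableSet_setOf_mem_and_dist_le {s : Set α} (hs : MeasurableSet s) {c : α → E}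
    (hc : Measurable c) : MeasurableSet {p : α × E | p.1 ∈ s ∧ dist p.2 (c p.1) ≤ r} :=
  (measurable_fst hs).inter
    (measurableSet_le (measurable_snd.dist (hc.comp measurable_fst)) measurable_const)

lemma MeasureTheory.Measure.prod_setOf_mem_and_dist_le_le (ρ : Measure α) (κ : Measure E)
    [SFinite κ] {s : Set α} (hs : MeasurableSet s) {c : α → E} (hc : Measurable c)
    (hκ : ∀ x, κ (closedBall x r) ≤ b) :
    ρ.prod κ {p | p.1 ∈ s ∧ dist p.2 (c p.1) ≤ r} ≤ b * ρ s := by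
  rw [Measure.prod_apply (measurableSet_setOf_mem_and_dist_le hs hc),
    ← lintegral_indicator_const hs]
  refine lintegral_mono fun a ↦ ?_
  by_cases ha : a ∈ s
  · rw [Set.indicator_of_mem ha]
    exact (measure_mono fun y hy ↦ hy.2).trans (hκ (c a))
  · simp [ha]

variable {Ω : Type*} [MeasurableSpace Ω] {P : Measure Ω} [IsFiniteMeasure P]

lemma ProbabilityTheory.IndepFun.measure_inter_dist_le {U : Ω → α} {V : Ω → E}
    (hUV : IndepFun U V P) (hU : Measurable U) (hV : Measurable V) {s : Set α}
    (hs : MeasurableSet s) {c : α → E} (hc : Measurable c) (hVr : ∀ x, P.map V (closedBall x r) ≤ b) :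
    P (U ⁻¹' s ∩ {ω | dist (V ω) (c (U ω)) ≤ r}) ≤ b * P (U ⁻¹' s) :=
  calc P (U ⁻¹' s ∩ {ω | dist (V ω) (c (U ω)) ≤ r})
      = P.map (fun ω ↦ (U ω, V ω)) {p | p.1 ∈ s ∧ dist p.2 (c p.1) ≤ r} := by
        rw [Measure.map_apply (hU.prodMk hV) (measurableSet_setOf_mem_and_dist_le hs hc)]
        rfl
    _ = (P.map U).prod (P.map V) {p | p.1 ∈ s ∧ dist p.2 (c p.1) ≤ r} := by
        rw [hUV.map_prod_eq_prod_map_map hU.aemeasurable hV.aemeasurable]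
    _ ≤ b * P.map U s := Measure.prod_setOf_mem_and_dist_le_le _ _ hs hc hVr
    _ = b * P (U ⁻¹' s) := by rw [Measure.map_apply hU hs]

end BallBound

lemma Fintype.sum_ite_eq_add_ite_fst_eq_add_ite_snd_eq {ι κ : Type*} [Fintype ι] [Fintype κ]
    [DecidableEq ι] [DecidableEq κ] (p : ι × κ) (a c : ℝ) :
    ∑ q : ι × κ, ((if p = q then a else 0) + (if p.1 = q.1 then c else 0)
      + (if p.2 = q.2 then c else 0)) = a + Fintype.card κ * c + Fintype.card ι * c := by
  simp only [Finset.sum_add_distrib, Fintype.sum_ite_eq]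
  rw [Fintype.sum_prod_type, Fintype.sum_prod_type, Finset.sum_comm]
  simp

lemma covariance_indicator_one_le {Ω : Type*} [MeasurableSpace Ω] {P : Measure Ω}
    [IsProbabilityMeasure P] {A B : Set Ω} (hA : MeasurableSet A) (hB : MeasurableSet B) :
    cov[A.indicator 1, B.indicator 1; P] ≤ P.real (A ∩ B) := by
  have hA2 : MemLp (A.indicator (1 : Ω → ℝ)) 2 P := (memLp_const 1).indicator hA
  have hB2 : MemLp (B.indicator (1 : Ω → ℝ)) 2 P := (memLp_const 1).indicator hB
  rw [covariance_eq_sub hA2 hB2,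
    ← Set.inter_indicator_one, integral_indicator_one (hA.inter hB), integral_indicator_one hA,
    integral_indicator_one hB]
  have : 0 ≤ P.real A * P.real B := by positivity
  linarith

section CrossEdges

variable {Ω E ι κ : Type*} [MeasurableSpace Ω] {P : Measure Ω} [PseudoMetricSpace E]
  [MeasurableSpace E] [OpensMeasurableSpace E] [SecondCountableTopology E]
  {X : ι → Ω → E} {Y : κ → Ω → E} {r β : ℝ}

def crossEdgeEvent (r : ℝ) (X : ι → Ω → E) (Y : κ → Ω → E) (p : ι × κ) : Set Ω :=
  {ω | dist (X p.1 ω) (Y p.2 ω) ≤ r}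

lemma measurableSet_crossEdgeEvent (hX : ∀ i, Measurable (X i)) (hY : ∀ j, Measurable (Y j))
    (p : ι × κ) : MeasurableSet (crossEdgeEvent r X Y p) :=
  measurableSet_le ((hX p.1).dist (hY p.2)) measurable_const

lemma memLp_indicator_crossEdgeEvent [IsFiniteMeasure P] (hX : ∀ i, Measurable (X i))
    (hY : ∀ j, Measurable (Y j)) (p : ι × κ) (q : ℝ≥0∞) :
    MemLp ((crossEdgeEvent r X Y p).indicator (1 : Ω → ℝ)) q P :=
  (memLp_const 1).indicator (measurableSet_crossEdgeEvent hX hY p)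

lemma measure_crossEdgeEvent_inter_le [IsFiniteMeasure P] (hX : ∀ i, Measurable (X i))
    (hY : ∀ j, Measurable (Y j)) (p : ι × κ) {V : Ω → E} (hV : Measurable V)
    (hpV : IndepFun (fun ω ↦ (X p.1 ω, Y p.2 ω)) V P) {b : ℝ≥0∞}
    (hVr : ∀ x, P.map V (closedBall x r) ≤ b) {c : E × E → E} (hc : Measurable c)
    (hp : P (crossEdgeEvent r X Y p) ≤ b) :
    P (crossEdgeEvent r X Y p ∩ {ω | dist (V ω) (c (X p.1 ω, Y p.2 ω)) ≤ r}) ≤ b * b :=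
  calc _ ≤ b * P (crossEdgeEvent r X Y p) :=
        hpV.measure_inter_dist_le ((hX p.1).prodMk (hY p.2)) hV
          (measurableSet_le measurable_dist measurable_const) hc hVr
    _ ≤ b * b := by gcongr

variable [IsProbabilityMeasure P]

lemma measure_crossEdgeEvent_le (hX : ∀ i, Measurable (X i)) (hY : ∀ j, Measurable (Y j))
    (hindep : iIndepFun (Sum.elim X Y) P) {b : ℝ≥0∞}
    (hYr : ∀ j x, P.map (Y j) (closedBall x r) ≤ b) (p : ι × κ) :
    P (crossEdgeEvent r X Y p) ≤ b := by
  have h := (hindep.indepFun Sum.inl_ne_inr : IndepFun (X p.1) (Y p.2) P).measure_inter_dist_le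
    (hX p.1) (hY p.2) MeasurableSet.univ measurable_id (hYr p.2)
  rw [Set.preimage_univ, Set.univ_inter, measure_univ, mul_one] at h
  refine le_of_eq_of_le ?_ h
  simp [crossEdgeEvent, dist_comm]

lemma measure_crossEdgeEvent_inter_of_fst_eq (hX : ∀ i, Measurable (X i))
    (hY : ∀ j, Measurable (Y j)) (hindep : iIndepFun (Sum.elim X Y) P) {b : ℝ≥0∞}
    (hYr : ∀ j x, P.map (Y j) (closedBall x r) ≤ b) (i : ι) {j l : κ} (hjl : j ≠ l) :
    P (crossEdgeEvent r X Y (i, j) ∩ crossEdgeEvent r X Y (i, l)) ≤ b * b := by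
  have hpV : IndepFun (fun ω ↦ (X i ω, Y j ω)) (Y l) P :=
    hindep.indepFun_prodMk (Sum.forall.2 ⟨hX, hY⟩) (.inl i) (.inr j) (.inr l) Sum.inl_ne_inr
      (Sum.inr_injective.ne hjl)
  convert measure_crossEdgeEvent_inter_le hX hY (i, j) (hY l) hpV (hYr l) measurable_fst
    (measure_crossEdgeEvent_le hX hY hindep hYr (i, j)) using 3
  simp [crossEdgeEvent, dist_comm]

lemma measure_crossEdgeEvent_inter_of_snd_eq (hX : ∀ i, Measurable (X i))
    (hY : ∀ j, Measurable (Y j)) (hindep : iIndepFun (Sum.elim X Y) P) {b : ℝ≥0∞}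
    (hXr : ∀ i x, P.map (X i) (closedBall x r) ≤ b)
    (hYr : ∀ j x, P.map (Y j) (closedBall x r) ≤ b) {i k : ι} (hik : i ≠ k) (j : κ) :
    P (crossEdgeEvent r X Y (i, j) ∩ crossEdgeEvent r X Y (k, j)) ≤ b * b := by
  have hpV : IndepFun (fun ω ↦ (X i ω, Y j ω)) (X k) P :=
    hindep.indepFun_prodMk (Sum.forall.2 ⟨hX, hY⟩) (.inl i) (.inr j) (.inl k)
      (Sum.inl_injective.ne hik) Sum.inr_ne_inl
  exact measure_crossEdgeEvent_inter_le hX hY (i, j) (hX k) hpV (hXr k) measurable_snd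
    (measure_crossEdgeEvent_le hX hY hindep hYr (i, j))

lemma covariance_crossEdgeEvent_eq_zero (hX : ∀ i, Measurable (X i))
    (hY : ∀ j, Measurable (Y j)) (hindep : iIndepFun (Sum.elim X Y) P) {i k : ι} {j l : κ}
    (hik : i ≠ k) (hjl : j ≠ l) :
    cov[(crossEdgeEvent r X Y (i, j)).indicator 1, (crossEdgeEvent r X Y (k, l)).indicator 1; P]
      = 0 := by
  have hind : IndepFun (fun ω ↦ (X i ω, Y j ω)) (fun ω ↦ (X k ω, Y l ω)) P :=
    hindep.indepFun_prodMk_prodMk (Sum.forall.2 ⟨hX, hY⟩) (.inl i) (.inr j) (.inl k) (.inr l)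
      (Sum.inl_injective.ne hik) Sum.inl_ne_inr Sum.inr_ne_inl (Sum.inr_injective.ne hjl)
  have hs : MeasurableSet {q : E × E | dist q.1 q.2 ≤ r} :=
    measurableSet_le measurable_dist measurable_const
  have hφ : Measurable ({q : E × E | dist q.1 q.2 ≤ r}.indicator (1 : E × E → ℝ)) :=
    measurable_one.indicator hs
  exact (hind.comp hφ hφ).covariance_eq_zero
    (memLp_indicator_crossEdgeEvent (r := r) hX hY (i, j) 2)
    (memLp_indicator_crossEdgeEvent (r := r) hX hY (k, l) 2)

lemma covariance_crossEdgeEvent_le [DecidableEq ι] [DecidableEq κ]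
    (hX : ∀ i, Measurable (X i)) (hY : ∀ j, Measurable (Y j))
    (hindep : iIndepFun (Sum.elim X Y) P) (hβ : 0 ≤ β)
    (hXr : ∀ i x, P.map (X i) (closedBall x r) ≤ .ofReal β)
    (hYr : ∀ j x, P.map (Y j) (closedBall x r) ≤ .ofReal β) (p q : ι × κ) :
    cov[(crossEdgeEvent r X Y p).indicator 1, (crossEdgeEvent r X Y q).indicator 1; P]
      ≤ (if p = q then β else 0) + (if p.1 = q.1 then β ^ 2 else 0)
        + (if p.2 = q.2 then β ^ 2 else 0) := by
  obtain ⟨i, j⟩ := p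
  obtain ⟨k, l⟩ := q
  have hcov := covariance_indicator_one_le (P := P) (A := crossEdgeEvent r X Y (i, j))
    (B := crossEdgeEvent r X Y (k, l)) (measurableSet_crossEdgeEvent hX hY (i, j))
    (measurableSet_crossEdgeEvent hX hY (k, l))
  have hβ2 : ENNReal.ofReal β * ENNReal.ofReal β = ENNReal.ofReal (β ^ 2) := by
    rw [← ENNReal.ofReal_mul hβ, sq]
  rcases eq_or_ne i k with rfl | hik <;> rcases eq_or_ne j l with rfl | hjl
  · have h : P.real (crossEdgeEvent r X Y (i, j)) ≤ β :=
      ENNReal.toReal_le_of_le_ofReal hβ (measure_crossEdgeEvent_le hX hY hindep hYr (i, j))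
    rw [Set.inter_self] at hcov
    rw [if_pos rfl, if_pos rfl, if_pos rfl]
    linarith [sq_nonneg β]
  · have h : P.real (crossEdgeEvent r X Y (i, j) ∩ crossEdgeEvent r X Y (i, l)) ≤ β ^ 2 :=
      ENNReal.toReal_le_of_le_ofReal (sq_nonneg β)
        (hβ2 ▸ measure_crossEdgeEvent_inter_of_fst_eq hX hY hindep hYr i hjl)
    simp only [Prod.mk.injEq, hjl, and_false, if_false, if_true, zero_add, add_zero]
    linarith
  · have h : P.real (crossEdgeEvent r X Y (i, j) ∩ crossEdgeEvent r X Y (k, j)) ≤ β ^ 2 :=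
      ENNReal.toReal_le_of_le_ofReal (sq_nonneg β)
        (hβ2 ▸ measure_crossEdgeEvent_inter_of_snd_eq hX hY hindep hXr hYr hik j)
    simp only [Prod.mk.injEq, hik, false_and, if_false, if_true, zero_add, add_zero]
    linarith
  · simp [hik, hjl, covariance_crossEdgeEvent_eq_zero hX hY hindep hik hjl]

end CrossEdges

theorem cross_edge_variance_bound_general
    {Ω' : Type*} [MeasurableSpace Ω'] (P : Measure Ω') [IsProbabilityMeasure P]
    (n₁ n₂ D : ℕ)
    (r β : ℝ) (hβ : 0 ≤ β)
    (μ ν : Measure (EuclideanSpace ℝ (Fin D)))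
    (X : Fin n₁ → Ω' → EuclideanSpace ℝ (Fin D))
    (Y : Fin n₂ → Ω' → EuclideanSpace ℝ (Fin D))
    (hXmeas : ∀ i, Measurable (X i)) (hYmeas : ∀ j, Measurable (Y j))
    (hindep : iIndepFun (Sum.elim X Y) P)
    (hX : ∀ i, Measure.map (X i) P = μ)
    (hY : ∀ j, Measure.map (Y j) P = ν)
    (Z : Ω' → ℝ)
    (hZ : ∀ ω, Z ω = ∑ i, ∑ j, if ‖X i ω - Y j ω‖ ≤ r then (1:ℝ) else 0)
    (hν : ∀ x : EuclideanSpace ℝ (Fin D),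
      ν (Metric.closedBall x r) ≤ ENNReal.ofReal β)
    (hμ : ∀ y : EuclideanSpace ℝ (Fin D),
      μ (Metric.closedBall y r) ≤ ENNReal.ofReal β) :
    variance Z P ≤ 4 * β * n₁ * n₂ + 2 * β^2 * n₁ * n₂ * (n₁ + n₂) := by
  have hZ_sum : Z = fun ω ↦ ∑ p : Fin n₁ × Fin n₂, (crossEdgeEvent r X Y p).indicator 1 ω := by
    ext ω
    rw [hZ, Fintype.sum_prod_type]
    simp only [crossEdgeEvent, Set.indicator_apply, Set.mem_ofPred_eq, dist_eq_norm,
      Pi.one_apply]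
  have hXr : ∀ i x, P.map (X i) (closedBall x r) ≤ .ofReal β := fun i x ↦ hX i ▸ hμ x
  have hYr : ∀ j x, P.map (Y j) (closedBall x r) ≤ .ofReal β := fun j x ↦ hY j ▸ hν x
  rw [hZ_sum, variance_fun_sum fun p ↦ memLp_indicator_crossEdgeEvent hXmeas hYmeas p 2]
  calc _ ≤ ∑ p : Fin n₁ × Fin n₂, ∑ q : Fin n₁ × Fin n₂, ((if p = q then β else 0)
          + (if p.1 = q.1 then β ^ 2 else 0) + (if p.2 = q.2 then β ^ 2 else 0)) := by
        gcongr with p _ q _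
        exact covariance_crossEdgeEvent_le hXmeas hYmeas hindep hβ hXr hYr p q
    _ = n₁ * n₂ * (β + n₂ * β ^ 2 + n₁ * β ^ 2) := by
        simp only [Fintype.sum_ite_eq_add_ite_fst_eq_add_ite_snd_eq, Finset.sum_const,
          Finset.card_univ, Fintype.card_prod, Fintype.card_fin, nsmul_eq_mul]
        push_cast
        ring
    _ ≤ 4 * β * n₁ * n₂ + 2 * β ^ 2 * n₁ * n₂ * (n₁ + n₂) := by
        have : 0 ≤ 3 * β * n₁ * n₂ + β ^ 2 * n₁ * n₂ * (n₁ + n₂) := by positivity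
        linarith

theorem cross_edge_variance_bound
    {Ω' : Type*} [MeasurableSpace Ω'] (P : Measure Ω') [IsProbabilityMeasure P]
    (n₁ n₂ D : ℕ) (hn₁ : 1 ≤ n₁) (hn₂ : 1 ≤ n₂) (hD : 1 ≤ D)
    (r β : ℝ) (hr : 0 < r) (hβ : 0 ≤ β)
    (μ ν : Measure (EuclideanSpace ℝ (Fin D)))
    (X : Fin n₁ → Ω' → EuclideanSpace ℝ (Fin D))
    (Y : Fin n₂ → Ω' → EuclideanSpace ℝ (Fin D))
    (hXmeas : ∀ i, Measurable (X i)) (hYmeas : ∀ j, Measurable (Y j))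
    (hindep : iIndepFun (Sum.elim X Y) P)
    (hX : ∀ i, Measure.map (X i) P = μ)
    (hY : ∀ j, Measure.map (Y j) P = ν)
    (Z : Ω' → ℝ)
    (hZ : ∀ ω, Z ω = ∑ i, ∑ j, if ‖X i ω - Y j ω‖ ≤ r then (1:ℝ) else 0)
    (hν : ∀ x : EuclideanSpace ℝ (Fin D),
      ν (Metric.closedBall x r) ≤ ENNReal.ofReal β)
    (hμ : ∀ y : EuclideanSpace ℝ (Fin D),
      μ (Metric.closedBall y r) ≤ ENNReal.ofReal β) :
    variance Z P ≤ 4 * β * n₁ * n₂ + 2 * β^2 * n₁ * n₂ * (n₁ + n₂) :=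
  cross_edge_variance_bound_general P n₁ n₂ D r β hβ μ ν X Y hXmeas hYmeas hindep hX hY Z hZ hν hμ
end

section
/- Let x₁,…,x_m ∈ ℝ^K and an assignment map s : {1,…,m} → {1,…,K} satisfy |x_i(t) − δ_{t,s(i)}| ≤ 1/(3K) for all i ∈ {1,…,m} and t ∈ {1,…,K}, and assume s is surjective, i.e., for every t ∈ {1,…,K} there exists i with s(i) = t. Define labels y_i = 1 if s(i) ≤ K' and y_i = −1 otherwise. If β ∈ ℝ^K satisfies y_i · ⟨β, x_i⟩ ≥ 1 for every i and ‖β‖² ≤ 9K/4, then β_t ≥ 1/2 for every t ≤ K' and β_t ≤ −1/2 for every t > K'. -/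
open scoped RealInnerProductSpace

theorem max_margin_solution_signs (K K' : ℕ) (hK : 1 ≤ K) (hK'1 : 1 ≤ K') (hK'K : K' ≤ K)
    (m : ℕ) (x : Fin m → EuclideanSpace ℝ (Fin K)) (s : Fin m → Fin K)
    (hx : ∀ i t, |x i t - (if t = s i then (1:ℝ) else 0)| ≤ 1 / (3 * K))
    (hsurj : ∀ t : Fin K, ∃ i, s i = t)
    (y : Fin m → ℝ)
    (hy : ∀ i, y i = if (s i : ℕ) < K' then (1:ℝ) else -1)
    (β : EuclideanSpace ℝ (Fin K))
    (hmargin : ∀ i, y i * ⟪β, x i⟫ ≥ 1)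
    (hnorm : ‖β‖^2 ≤ 9 * K / 4) :
    (∀ t : Fin K, (t : ℕ) < K' → β t ≥ 1/2) ∧
    (∀ t : Fin K, ¬ ((t : ℕ) < K') → β t ≤ -(1/2)) := by
  have hKpos : (0:ℝ) < K := by exact_mod_cast hK
  have hβsq : ∑ t, (β t)^2 ≤ 9 * K / 4 := by
    have h1 : ‖β‖ = Real.sqrt (∑ t, ‖β t‖ ^ 2) := EuclideanSpace.norm_eq β
    have h2 : ‖β‖^2 = ∑ t, (β t)^2 := by
      rw [h1, Real.sq_sqrt (by positivity)]
      simp [sq_abs]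
    linarith [h2 ▸ hnorm]
  have key : ∀ i : Fin m, |⟪β, x i⟫ - β (s i)| ≤ 1/2 := by
    intro i
    have hinner : ⟪β, x i⟫ = ∑ t, β t * x i t := by
      simp [PiLp.inner_apply, RCLike.inner_apply, mul_comm]
    have hβi : β (s i) = ∑ t, β t * (if t = s i then (1:ℝ) else 0) := by
      simp [Finset.sum_ite_eq']
    have hS : ⟪β, x i⟫ - β (s i) = ∑ t, β t * (x i t - (if t = s i then (1:ℝ) else 0)) := by
      rw [hinner, hβi, ← Finset.sum_sub_distrib]
      congr 1; ext t; ring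
    set d : Fin K → ℝ := fun t => x i t - (if t = s i then (1:ℝ) else 0) with hd
    have hdsq : ∑ t, (d t)^2 ≤ 1 / (9 * K) := by
      have hb : ∀ t, (d t)^2 ≤ (1 / (3 * K))^2 := by
        intro t
        have := hx i t
        rw [abs_le] at this
        nlinarith [this.1, this.2]
      calc ∑ t, (d t)^2 ≤ ∑ _t : Fin K, (1 / (3 * (K:ℝ)))^2 :=
            Finset.sum_le_sum fun t _ => hb t
        _ = K * (1 / (3 * K))^2 := by simp [Finset.sum_const, mul_comm]
        _ = 1 / (9 * K) := by field_simp; ring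
    have hcs := Finset.sum_mul_sq_le_sq_mul_sq Finset.univ (fun t => β t) d
    have hsq : (⟪β, x i⟫ - β (s i))^2 ≤ 1/4 := by
      rw [hS]
      calc (∑ t, β t * d t)^2 ≤ (∑ t, (β t)^2) * ∑ t, (d t)^2 := hcs
        _ ≤ (9 * K / 4) * (1 / (9 * K)) := by
            apply mul_le_mul hβsq hdsq (Finset.sum_nonneg fun t _ => sq_nonneg _) (by positivity)
        _ = 1/4 := by field_simp
    nlinarith [abs_nonneg (⟪β, x i⟫ - β (s i)), sq_abs (⟪β, x i⟫ - β (s i))]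
  constructor
  · intro t ht
    obtain ⟨i, hi⟩ := hsurj t
    have hyi : y i = 1 := by rw [hy i, if_pos (hi ▸ ht)]
    have hm := hmargin i
    rw [hyi, one_mul] at hm
    have := key i
    rw [hi, abs_le] at this
    linarith [this.1, this.2]
  · intro t ht
    obtain ⟨i, hi⟩ := hsurj t
    have hyi : y i = -1 := by rw [hy i, if_neg (hi ▸ ht)]
    have hm := hmargin i
    rw [hyi] at hm
    have := key i
    rw [hi, abs_le] at this
    linarith [this.1, this.2]
end
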